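/- arXiv:2105.08177 — 2 statements merged into one kernel-verified Lean document; each statement's English description precedes it below -/
import Mathlib

section
/- Let M ≥ 1 and u, v : Fin M → ℝ. The power sums of u and v agree up to order M, i.e., Σ_{m=1}^{M} (u_m)^q = Σ_{m=1}^{M} (v_m)^q for every q = 1, …, M, if and only if v is a permutation of u, i.e., there exists a permutation σ of Fin M with v_m = u_{σ(m)} for all m. -/
/-!
By Newton's identities, the power sums `p_1, …, p_M` determine the elementary symmetric
functions `e_1, …, e_M` over a domain of characteristic zero (the recursion divides by `k`).
These are, up to sign, the coefficients of `∏ (X - u_m)`, so this polynomial and hence its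
multiset of roots is determined. Equal multisets of values give fibres of equal size, and
matching up the fibres yields the permutation.
-/

open Finset Polynomial

theorem MvPolynomial.eval_esymm_eq_of_sum_pow_eq {σ R : Type*} [Fintype σ] [CommRing R]
    [IsDomain R] [CharZero R] {n : ℕ} {u v : σ → R}
    (h : ∀ q, 1 ≤ q → q ≤ n → ∑ i, u i ^ q = ∑ i, v i ^ q) {k : ℕ} (hk : k ≤ n) :
    eval u (esymm σ R k) = eval v (esymm σ R k) := by
  induction k using Nat.strong_induction_on with
  | _ k ih =>
  rcases k.eq_zero_or_pos with rfl | hk0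
  · simp
  refine mul_left_cancel₀ (Nat.cast_ne_zero.mpr hk0.ne' : (k : R) ≠ 0) ?_
  have newton (w : σ → R) := congrArg (eval w) (mul_esymm_eq_sum σ R k)
  simp only [map_mul, map_sum, map_pow, map_neg, map_one, map_natCast] at newton
  rw [newton u, newton v]
  congr 1
  refine sum_congr rfl fun a ha => ?_
  obtain ⟨hsum, hlt⟩ : a.1 + a.2 = k ∧ a.1 < k := by simpa using ha
  have hpsum : eval u (psum σ R a.2) = eval v (psum σ R a.2) := by
    simpa [psum] using h a.2 (by omega) (by omega)
  rw [ih a.1 hlt (by omega), hpsum]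

theorem Multiset.eq_of_card_eq_of_esymm_eq {R : Type*} [CommRing R] [IsDomain R]
    {s t : Multiset R} (hcard : card s = card t) (h : ∀ k ≤ card s, s.esymm k = t.esymm k) :
    s = t := by
  have hprod : (s.map fun r => X - C r).prod = (t.map fun r => X - C r).prod := by
    rw [prod_X_sub_X_eq_sum_esymm, prod_X_sub_X_eq_sum_esymm, ← hcard]
    exact sum_congr rfl fun k hk => by rw [h k (Nat.lt_succ_iff.mp (mem_range.mp hk))]
  simpa only [roots_multiset_prod_X_sub_C] using congrArg roots hprod

theorem Fintype.map_univ_eq_of_sum_pow_eq {ι R : Type*} [Fintype ι] [CommRing R] [IsDomain R]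
    [CharZero R] {u v : ι → R}
    (h : ∀ q, 1 ≤ q → q ≤ card ι → ∑ i, u i ^ q = ∑ i, v i ^ q) :
    univ.val.map u = univ.val.map v := by
  refine Multiset.eq_of_card_eq_of_esymm_eq (by simp) fun k hk => ?_
  simp only [← MvPolynomial.aeval_esymm_eq_multiset_esymm ι R]
  exact MvPolynomial.eval_esymm_eq_of_sum_pow_eq h (by simpa using hk)

theorem Fintype.exists_perm_of_map_univ_eq {ι α : Type*} [Fintype ι]
    {u v : ι → α} (h : univ.val.map u = univ.val.map v) :
    ∃ σ : Equiv.Perm ι, ∀ i, v i = u (σ i) := by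
  classical
  have hfiber (a : α) : Fintype.card {i // v i = a} = Fintype.card {i // u i = a} := by
    have := congrArg (Multiset.count a) h
    simp only [Multiset.count_map, Fintype.card_subtype, Finset.card_def, Finset.filter_val,
      eq_comm (a := a)] at this ⊢
    exact this.symm
  let e : ∀ a, {i // v i = a} ≃ {i // u i = a} := fun a => Fintype.equivOfCardEq (hfiber a)
  exact ⟨Equiv.ofFiberEquiv e, fun i => (Equiv.ofFiberEquiv_map e i).symm⟩

theorem powerSums_eq_iff_exists_perm_general (M : ℕ) (u v : Fin M → ℝ) :
    (∀ q : ℕ, 1 ≤ q → q ≤ M → ∑ m, u m ^ q = ∑ m, v m ^ q) ↔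
      ∃ σ : Equiv.Perm (Fin M), ∀ m, v m = u (σ m) := by
  constructor
  · intro h
    exact Fintype.exists_perm_of_map_univ_eq <|
      Fintype.map_univ_eq_of_sum_pow_eq (by simpa only [Fintype.card_fin] using h)
  · rintro ⟨σ, hσ⟩ q - -
    simp only [hσ]
    exact (Equiv.sum_comp σ (u · ^ q)).symm

/-- For `M ≥ 1` and real `M`-tuples `u, v`, the power sums agree
up to order `M` (`∑_m (u_m)^q = ∑_m (v_m)^q` for all `q = 1, …, M`) if and only
if `v` is a permutation of `u`, i.e. there is `σ : Perm (Fin M)` with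
`v_m = u_{σ m}` for all `m`. -/
theorem powerSums_eq_iff_exists_perm (M : ℕ) (hM : 1 ≤ M) (u v : Fin M → ℝ) :
    (∀ q : ℕ, 1 ≤ q → q ≤ M → ∑ m, u m ^ q = ∑ m, v m ^ q) ↔
      ∃ σ : Equiv.Perm (Fin M), ∀ m, v m = u (σ m) :=
  powerSums_eq_iff_exists_perm_general M u v
end

section
/- Let M ≥ 1 and let V : ℂ^M → ℂ^M be the Vieta map sending an M-tuple of roots z = (z_1, …, z_M) to the tuple of non-leading coefficients (c_1, …, c_M) of the monic polynomial ∏_{m=1}^{M}(X − z_m) = X^M + c_1 X^{M−1} + ⋯ + c_M. Then V is continuous, surjective, and a topological quotient map, and its fibers are exactly the permutation orbits: V(u) = V(v) if and only if there exists a permutation σ of Fin M with v = u ∘ σ. Consequently V induces a homeomorphism from the quotient ℂ^M / S_M (unordered M-tuples with the quotient topology) onto ℂ^M. -/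
/-! The Vieta map sends `z` to the coefficients of the monic polynomial `∏ (X - z_m)`, and that
polynomial determines the multiset of its roots; so the fibres are exactly the permutation orbits,
and surjectivity is the fundamental theorem of algebra. Cauchy's bound `‖z_m‖ < 1 + max_k ‖c_k‖`
makes the map proper, hence closed, hence (being continuous and surjective) a quotient map, and a
quotient map whose fibres are the orbits induces a homeomorphism from the orbit space. -/

/-- The Vieta map `ℂ^M → ℂ^M` sending roots `(z_1, …, z_M)` to the non-leading
coefficients `(c_1, …, c_M)` of `∏_m (X - z_m) = X^M + c_1 X^{M-1} + ⋯ + c_M`;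
the `k`-th entry (for `k : Fin M`, i.e. `c_{k+1}`) is the coefficient of
`X^{M-1-k}`. -/
noncomputable def vieta (M : ℕ) (z : Fin M → ℂ) : Fin M → ℂ :=
  fun k => (∏ m, (Polynomial.X - Polynomial.C (z m))).coeff (M - 1 - (k : ℕ))

open Polynomial Finset Filter Topology

theorem Fintype.univ_val_map_eq_iff_exists_perm {ι α : Type*} [Fintype ι] {u v : ι → α} :
    univ.val.map u = univ.val.map v ↔ ∃ σ : Equiv.Perm ι, v = u ∘ σ := by
  classical
  constructor
  · intro h
    have hfiber (a : α) : Fintype.card {i // v i = a} = Fintype.card {i // u i = a} := by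
      have hcount := congrArg (Multiset.count a) h.symm
      simp only [Multiset.count_map] at hcount
      simpa [Fintype.card_subtype, Finset.card_def, Finset.filter_val, eq_comm] using hcount
    exact ⟨Equiv.ofFiberEquiv fun a => Fintype.equivOfCardEq (hfiber a),
      funext fun i => (Equiv.ofFiberEquiv_map _ i).symm⟩
  · rintro ⟨σ, rfl⟩
    rw [← Multiset.map_map, Multiset.map_univ_val_equiv]

theorem Multiset.exists_fin_univ_val_map_eq {α : Type*} {n : ℕ} (s : Multiset α)
    (hs : s.card = n) : ∃ z : Fin n → α, univ.val.map z = s := by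
  induction s using Quotient.inductionOn with
  | h l =>
    rw [Multiset.quot_mk_to_coe, Multiset.coe_card] at hs
    subst hs
    exact ⟨l.get, by simp [Fin.univ_val_map]⟩

namespace Polynomial

variable {R : Type*} [CommRing R]

theorem Monic.eq_iff_coeff_lt {p q : R[X]} {n : ℕ} (hp : p.Monic) (hq : q.Monic)
    (hpn : p.natDegree = n) (hqn : q.natDegree = n) :
    p = q ↔ ∀ i < n, p.coeff i = q.coeff i := by
  rw [ext_iff_natDegree_le hpn.le hqn.le]
  refine ⟨fun h i hi => h i hi.le, fun h i hi => ?_⟩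
  rcases hi.lt_or_eq with hi | rfl
  · exact h i hi
  · rw [← hpn, hp.coeff_natDegree, hpn, ← hqn, hq.coeff_natDegree]

theorem exists_monic_natDegree_eq_coeff_eq [Nontrivial R] {n : ℕ} (c : Fin n → R) :
    ∃ p : R[X], p.Monic ∧ p.natDegree = n ∧ ∀ i : Fin n, p.coeff i = c i := by
  set q : R[X] := ((degreeLTEquiv R n).symm c).1
  have hq : q.degree < n := mem_degreeLT.mp ((degreeLTEquiv R n).symm c).2
  have hdeg : (X ^ n + q).degree = (n : WithBot ℕ) := by
    rw [degree_add_eq_left_of_degree_lt (by rwa [degree_X_pow]), degree_X_pow]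
  refine ⟨X ^ n + q, monic_X_pow_add hq, natDegree_eq_of_degree_eq_some hdeg, fun i => ?_⟩
  rw [coeff_add, coeff_X_pow, if_neg i.isLt.ne, zero_add]
  exact congrFun ((degreeLTEquiv R n).apply_symm_apply c) i

theorem natDegree_prod_map_univ_X_sub_C [Nontrivial R] {M : ℕ} (z : Fin M → R) :
    ((univ.val.map z).map fun a => X - C a).prod.natDegree = M := by
  rw [natDegree_multiset_prod_X_sub_C_eq_card, Multiset.card_map, Finset.card_val, card_univ,
    Fintype.card_fin]

theorem multiset_prod_X_sub_C_injective [IsDomain R] :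
    Function.Injective fun s : Multiset R => (s.map fun a => X - C a).prod :=
  Function.LeftInverse.injective (g := roots) roots_multiset_prod_X_sub_C

theorem Monic.exists_multiset_prod_X_sub_C_eq {K : Type*} [Field K] [IsAlgClosed K] {p : K[X]}
    (hp : p.Monic) : ∃ s : Multiset K, s.card = p.natDegree ∧ (s.map fun a => X - C a).prod = p :=
  ⟨p.roots, IsAlgClosed.card_roots_eq_natDegree,
    prod_multiset_X_sub_C_of_monic_of_roots_card_eq hp IsAlgClosed.card_roots_eq_natDegree⟩

theorem continuous_coeff_prod_X_sub_C [TopologicalSpace R] [IsTopologicalRing R]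
    {ι : Type*} [Fintype ι] (k : ℕ) :
    Continuous fun z : ι → R => (∏ i, (X - C (z i))).coeff k := by
  have hcoeff (z : ι → R) : (∏ i, (X - C (z i))).coeff k =
      MvPolynomial.eval z ((∏ i, (X - C (MvPolynomial.X i)) : (MvPolynomial ι R)[X]).coeff k) := by
    rw [← coeff_map]
    simp [Polynomial.map_prod]
  simp_rw [hcoeff]
  exact MvPolynomial.continuous_eval _

theorem Monic.cauchyBound_le {K : Type*} [NormedDivisionRing K] {p : K[X]} (hp : p.Monic)
    {B : NNReal} (hB : ∀ i < p.natDegree, ‖p.coeff i‖₊ ≤ B) : cauchyBound p ≤ B + 1 := by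
  rw [cauchyBound, hp.leadingCoeff, nnnorm_one, div_one]
  gcongr
  exact Finset.sup_le fun i hi => hB i (Finset.mem_range.mp hi)

end Polynomial

theorem isProperMap_of_norm_le_norm_add {E F : Type*} [NormedAddCommGroup E] [ProperSpace E]
    [NormedAddCommGroup F] [ProperSpace F] {f : E → F} (hf : Continuous f) (c : ℝ)
    (hc : ∀ x, ‖x‖ ≤ ‖f x‖ + c) : IsProperMap f := by
  refine isProperMap_iff_tendsto_cocompact.2 ⟨hf, ?_⟩
  rw [← Metric.cobounded_eq_cocompact, ← Metric.cobounded_eq_cocompact,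
    ← tendsto_norm_atTop_iff_cobounded]
  exact tendsto_atTop_mono (fun x => by linarith [hc x])
    (tendsto_atTop_add_const_right _ (-c) tendsto_norm_cobounded_atTop)

theorem Topology.IsQuotientMap.exists_homeomorph_quotient {X Y : Type*} [TopologicalSpace X]
    [TopologicalSpace Y] {f : X → Y} (hf : IsQuotientMap f) {s : Setoid X}
    (hs : ∀ x y, s x y ↔ f x = f y) : ∃ h : Quotient s ≃ₜ Y, ∀ x, h ⟦x⟧ = f x := by
  obtain rfl : s = Setoid.ker f := Setoid.ext hs
  exact ⟨IsQuotientMap.homeomorph (f := ⟨f, hf.continuous⟩) hf, fun _ => rfl⟩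

theorem DomMulAct.orbitRel_perm_iff {ι α : Type*} {u v : ι → α} :
    MulAction.orbitRel (Equiv.Perm ι)ᵈᵐᵃ (ι → α) u v ↔ ∃ σ : Equiv.Perm ι, v = u ∘ σ := by
  rw [MulAction.orbitRel_apply, MulAction.mem_orbit_iff]
  constructor
  · rintro ⟨g, rfl⟩
    exact ⟨(mk.symm g)⁻¹, funext fun i => by simp [smul_apply]⟩
  · rintro ⟨σ, rfl⟩
    exact ⟨mk σ⁻¹, funext fun i => by simp [smul_apply]⟩

theorem vieta_apply (M : ℕ) (z : Fin M → ℂ) (k : Fin M) :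
    vieta M z k = ((univ.val.map z).map fun a => X - C a).prod.coeff (Fin.rev k) := by
  rw [Multiset.map_map, Finset.prod_map_val, vieta, Fin.val_rev]
  congr 1
  omega

theorem continuous_vieta (M : ℕ) : Continuous (vieta M) :=
  continuous_pi fun _ => continuous_coeff_prod_X_sub_C _

theorem vieta_eq_vieta_iff {M : ℕ} {u v : Fin M → ℂ} :
    vieta M u = vieta M v ↔ ∃ σ : Equiv.Perm (Fin M), v = u ∘ σ := by
  rw [← Fintype.univ_val_map_eq_iff_exists_perm, ← multiset_prod_X_sub_C_injective.eq_iff,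
    (monic_multisetProd_X_sub_C _).eq_iff_coeff_lt (monic_multisetProd_X_sub_C _)
      (natDegree_prod_map_univ_X_sub_C u) (natDegree_prod_map_univ_X_sub_C v),
    funext_iff, Fin.rev_surjective.forall]
  simp only [vieta_apply, Fin.rev_rev, Fin.forall_iff]

theorem vieta_surjective (M : ℕ) : Function.Surjective (vieta M) := by
  intro c
  obtain ⟨p, hp, hpM, hpc⟩ := exists_monic_natDegree_eq_coeff_eq (c ∘ Fin.rev)
  obtain ⟨s, hs, rfl⟩ := hp.exists_multiset_prod_X_sub_C_eq
  obtain ⟨z, rfl⟩ := s.exists_fin_univ_val_map_eq (hs.trans hpM)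
  exact ⟨z, funext fun k => by rw [vieta_apply, hpc, Function.comp_apply, Fin.rev_rev]⟩

theorem norm_le_norm_vieta_add_one {M : ℕ} (z : Fin M → ℂ) : ‖z‖ ≤ ‖vieta M z‖ + 1 := by
  set P := ((univ.val.map z).map fun a => X - C a).prod
  have hP : P.Monic := monic_multisetProd_X_sub_C _
  have hbound : cauchyBound P ≤ ‖vieta M z‖₊ + 1 := hP.cauchyBound_le fun i hi => by
    rw [natDegree_prod_map_univ_X_sub_C] at hi
    simpa only [vieta_apply, Fin.rev_rev] using nnnorm_le_pi_nnnorm (vieta M z) (Fin.rev ⟨i, hi⟩)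
  refine (pi_norm_le_iff_of_nonneg (by positivity)).2 fun m => ?_
  have hroot : P.IsRoot (z m) := by
    rw [← mem_roots hP.ne_zero, roots_multiset_prod_X_sub_C]
    exact Multiset.mem_map_of_mem _ (mem_univ m)
  exact (hroot.norm_lt_cauchyBound hP.ne_zero).le.trans (by exact_mod_cast hbound)

theorem isProperMap_vieta (M : ℕ) : IsProperMap (vieta M) :=
  isProperMap_of_norm_le_norm_add (continuous_vieta M) 1 norm_le_norm_vieta_add_one

theorem vieta_isQuotientMap_general (M : ℕ) :
    Continuous (vieta M) ∧
    Function.Surjective (vieta M) ∧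
    Topology.IsQuotientMap (vieta M) ∧
    (∀ u v : Fin M → ℂ,
      vieta M u = vieta M v ↔ ∃ σ : Equiv.Perm (Fin M), v = u ∘ σ) ∧
    ∃ h : Quotient (MulAction.orbitRel (Equiv.Perm (Fin M))ᵈᵐᵃ (Fin M → ℂ)) ≃ₜ
        (Fin M → ℂ),
      ∀ z : Fin M → ℂ, h ⟦z⟧ = vieta M z := by
  have hquot : IsQuotientMap (vieta M) :=
    (isProperMap_vieta M).isClosedMap.isQuotientMap (continuous_vieta M) (vieta_surjective M)
  refine ⟨continuous_vieta M, vieta_surjective M, hquot, fun _ _ => vieta_eq_vieta_iff,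
    hquot.exists_homeomorph_quotient fun u v => ?_⟩
  rw [DomMulAct.orbitRel_perm_iff, vieta_eq_vieta_iff]

/-- For `M ≥ 1`, the Vieta map is continuous, surjective, a topological
quotient map, and its fibers are exactly the permutation orbits; consequently it
induces a homeomorphism from `ℂ^M / S_M` (unordered `M`-tuples, with the quotient
topology for the coordinate-permutation action) onto `ℂ^M`. -/
theorem vieta_isQuotientMap (M : ℕ) (hM : 1 ≤ M) :
    Continuous (vieta M) ∧
    Function.Surjective (vieta M) ∧
    Topology.IsQuotientMap (vieta M) ∧
    (∀ u v : Fin M → ℂ,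
      vieta M u = vieta M v ↔ ∃ σ : Equiv.Perm (Fin M), v = u ∘ σ) ∧
    ∃ h : Quotient (MulAction.orbitRel (Equiv.Perm (Fin M))ᵈᵐᵃ (Fin M → ℂ)) ≃ₜ
        (Fin M → ℂ),
      ∀ z : Fin M → ℂ, h ⟦z⟧ = vieta M z :=
  vieta_isQuotientMap_general M
end
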